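/- arXiv:2206.12448 — 2 statements merged into one kernel-verified Lean document; each statement's English description precedes it below -/
import Mathlib

section
/- Every monoidal category is monoidally equivalent to a strict monoidal category (Strictification Theorem). -/
/-!
Take as objects the lists of objects of `C`, read as right-bracketed tensor products
`X₁ ⊗ (X₂ ⊗ (⋯ ⊗ 𝟙_ C))`, and as morphisms the morphisms of `C` between these readings.
Concatenation of lists is strictly associative and unital, and the canonical isomorphisms
`listTensor L ⊗ listTensor M ≅ listTensor (L ++ M)` satisfy the associativity and unit
coherences of a monoidal functor, by induction on `L` from the pentagon and triangle identities.
So the monoidal structure of `C` can be pulled back along the reading functor, which becomes a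
monoidal equivalence; its inverse is the required functor.
-/

open CategoryTheory MonoidalCategory

universe v u

/-- A witness that a monoidal category `C` is monoidally equivalent to a strict monoidal
category: a category `D` with a monoidal structure whose tensor product is strictly
associative and strictly unital (the associator and unitors are identities, i.e. `eqToHom`s),
together with a monoidal functor `C ⥤ D` which is an equivalence of categories. -/
structure Strictification (C : Type u) [Category.{v} C] [MonoidalCategory C] where
  D : Type (max u v)
  [catD : Category.{max u v} D]
  [monD : MonoidalCategory D]
  tensor_assoc : ∀ X Y Z : D, (X ⊗ Y) ⊗ Z = X ⊗ (Y ⊗ Z)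
  unit_tensor : ∀ X : D, 𝟙_ D ⊗ X = X
  tensor_unit : ∀ X : D, X ⊗ 𝟙_ D = X
  associator_eq : ∀ X Y Z : D, (α_ X Y Z).hom = eqToHom (tensor_assoc X Y Z)
  leftUnitor_eq : ∀ X : D, (λ_ X).hom = eqToHom (unit_tensor X)
  rightUnitor_eq : ∀ X : D, (ρ_ X).hom = eqToHom (tensor_unit X)
  F : C ⥤ D
  [monF : F.Monoidal]
  isEquiv : F.IsEquivalence

namespace CategoryTheory.MonoidalCategory

variable {C : Type u} [Category.{v} C] [MonoidalCategory C]

abbrev listTensor : List C → C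
  | [] => 𝟙_ C
  | X :: L => X ⊗ listTensor L

def listTensorAppendIso : (L M : List C) → listTensor L ⊗ listTensor M ≅ listTensor (L ++ M)
  | [], M => λ_ (listTensor M)
  | X :: L, M => α_ X (listTensor L) (listTensor M) ≪≫ whiskerLeftIso X (listTensorAppendIso L M)

@[simp]
lemma listTensorAppendIso_nil (M : List C) : listTensorAppendIso [] M = λ_ (listTensor M) :=
  rfl

@[simp]
lemma listTensorAppendIso_cons (X : C) (L M : List C) :
    listTensorAppendIso (X :: L) M =
      α_ X (listTensor L) (listTensor M) ≪≫ whiskerLeftIso X (listTensorAppendIso L M) :=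
  rfl

lemma listTensorAppendIso_nil_right (L : List C) :
    listTensorAppendIso L [] =
      ρ_ (listTensor L) ≪≫ eqToIso (congrArg listTensor L.append_nil.symm) := by
  ext
  induction L with
  | nil => simp [unitors_equal]
  | cons X L ih =>
    rw [listTensorAppendIso_cons, Iso.trans_hom, whiskerLeftIso_hom, ih, Iso.trans_hom,
      eqToIso.hom, whiskerLeft_comp, whiskerLeft_eqToHom, ← Category.assoc,
      ← rightUnitor_tensor_hom]
    rfl

lemma listTensorAppendIso_assoc (L M N : List C) :
    (α_ _ _ _).hom ≫ listTensor L ◁ (listTensorAppendIso M N).hom ≫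
        (listTensorAppendIso L (M ++ N)).hom =
      (listTensorAppendIso L M).hom ▷ listTensor N ≫ (listTensorAppendIso (L ++ M) N).hom ≫
        eqToHom (congrArg listTensor (L.append_assoc M N)) := by
  induction L with
  | nil => simp
  | cons X L ih =>
    simp only [List.cons_append, listTensorAppendIso_cons, Iso.trans_hom, whiskerLeftIso_hom,
      comp_whiskerRight, Category.assoc, associator_naturality_middle_assoc]
    dsimp only [listTensor]
    rw [associator_naturality_right_assoc, ← pentagon_assoc, ← whiskerLeft_comp_assoc,
      ← whiskerLeft_comp, Category.assoc, ih]
    simp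

variable (C) in
abbrev Strictified : Type u := InducedCategory C (listTensor : List C → C)

namespace Strictified

open InducedCategory

instance : MonoidalCategoryStruct (Strictified C) where
  tensorObj (L M : List C) := L ++ M
  whiskerLeft L _ _ f :=
    homMk ((listTensorAppendIso _ _).inv ≫ listTensor L ◁ f.hom ≫ (listTensorAppendIso _ _).hom)
  whiskerRight f M :=
    homMk ((listTensorAppendIso _ _).inv ≫ f.hom ▷ listTensor M ≫ (listTensorAppendIso _ _).hom)
  tensorHom f g :=
    homMk ((listTensorAppendIso _ _).inv ≫ (f.hom ⊗ₘ g.hom) ≫ (listTensorAppendIso _ _).hom)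
  tensorUnit := ([] : List C)
  associator L M N := eqToIso (List.append_assoc L M N)
  leftUnitor L := eqToIso (List.nil_append L)
  rightUnitor L := eqToIso (List.append_nil L)

lemma tensorObj_eq_append (L M : Strictified C) : L ⊗ M = List.append L M := rfl

lemma tensorUnit_eq_nil : 𝟙_ (Strictified C) = ([] : List C) := rfl

lemma associator_hom (L M N : Strictified C) :
    (α_ L M N).hom = eqToHom (show (L ⊗ M) ⊗ N = L ⊗ (M ⊗ N) from List.append_assoc L M N) :=
  rfl

lemma leftUnitor_hom (L : Strictified C) :
    (λ_ L).hom = eqToHom (show 𝟙_ _ ⊗ L = L from List.nil_append L) :=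
  rfl

lemma rightUnitor_hom (L : Strictified C) :
    (ρ_ L).hom = eqToHom (show L ⊗ 𝟙_ _ = L from List.append_nil L) :=
  rfl

def inducingFunctorData :
    Monoidal.InducingFunctorData (inducedFunctor (listTensor (C := C))) where
  μIso := listTensorAppendIso
  whiskerLeft_eq _ _ _ _ := rfl
  whiskerRight_eq _ _ := rfl
  tensorHom_eq _ _ := rfl
  εIso := Iso.refl (𝟙_ C)
  associator_eq L M N := by
    simp only [associator_hom, inducedFunctor_map, inducedFunctor_obj, eqToHom_hom,
      Iso.trans_hom, Iso.symm_hom, tensorIso_hom, Iso.refl_hom, tensorHom_id, id_tensorHom,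
      Category.assoc, tensorObj_eq_append, List.append_eq]
    rw [listTensorAppendIso_assoc L M N]
    simp
  leftUnitor_eq L := by simp [leftUnitor_hom, tensorUnit_eq_nil]
  rightUnitor_eq L := by
    simp [rightUnitor_hom, tensorUnit_eq_nil, eqToHom_hom, listTensorAppendIso_nil_right]

instance : MonoidalCategory (Strictified C) := Monoidal.induced _ inducingFunctorData

instance : (inducedFunctor (listTensor (C := C))).Monoidal :=
  Monoidal.fromInducedMonoidal _ inducingFunctorData

instance : (inducedFunctor (listTensor (C := C))).EssSurj := ⟨fun X => ⟨[X], ⟨ρ_ X⟩⟩⟩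

instance : (inducedFunctor (listTensor (C := C))).IsEquivalence where

variable (C) in
noncomputable abbrev equivalence : Strictified C ≌ C := (inducedFunctor listTensor).asEquivalence

instance : (equivalence C).functor.Monoidal :=
  inferInstanceAs (inducedFunctor (listTensor (C := C))).Monoidal

noncomputable instance : (equivalence C).inverse.Monoidal := (equivalence C).inverseMonoidal

end Strictified

end CategoryTheory.MonoidalCategory

/-- Strictification Theorem: every monoidal category is monoidally
equivalent to a strict monoidal category. -/
theorem strictification (C : Type u) [Category.{v} C] [MonoidalCategory C] :
    Nonempty (Strictification C) := by
  -- `Strictified C` has morphisms in `v`; `AsSmall` first moves `C` into the universe `max u v`.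
  let C' := Monoidal.Transported (AsSmall.equiv : C ≌ AsSmall.{0} C)
  exact ⟨{
    D := Strictified C'
    tensor_assoc := List.append_assoc
    unit_tensor := List.nil_append
    tensor_unit := List.append_nil
    associator_eq := Strictified.associator_hom
    leftUnitor_eq := Strictified.leftUnitor_hom
    rightUnitor_eq := Strictified.rightUnitor_hom
    F := (Monoidal.equivalenceTransported _).functor ⋙ (Strictified.equivalence C').inverse
    isEquiv := inferInstance }⟩
end

section
/- In a monoidal algebra context: the Frobenius relation δ ∘ μ = (μ ⊗ id) ∘ (id ⊗ δ) = (id ⊗ μ) ∘ (δ ⊗ id) together with the unit law for η and the counit law for ε imply associativity of μ: μ ∘ (id ⊗ μ) = μ ∘ (μ ⊗ id), and coassociativity of δ: (δ ⊗ id) ∘ δ = (id ⊗ δ) ∘ δ. That is, given morphisms μ : A ⊗ A → A, η : e → A, δ : A → A ⊗ A, ε : A → e in a monoidal category satisfying the unit laws μ ∘ (η ⊗ id) = id = μ ∘ (id ⊗ η), the counit laws (ε ⊗ id) ∘ δ = id = (id ⊗ ε) ∘ δ, and the Frobenius relation, μ is associative and δ is coassociative. -/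
set_option maxHeartbeats 1600000

open CategoryTheory MonoidalCategory

/-- in a monoidal category, given morphisms `μ : A ⊗ A ⟶ A`, `η : 𝟙_C ⟶ A`,
`δ : A ⟶ A ⊗ A`, `ε : A ⟶ 𝟙_C` satisfying the unit laws, counit laws and the Frobenius
relation, the multiplication `μ` is associative and the comultiplication `δ` is
coassociative. -/
theorem frobenius_implies_assoc_coassoc {C : Type*} [Category C] [MonoidalCategory C]
    {A : C} (mul : A ⊗ A ⟶ A) (one : 𝟙_ C ⟶ A) (comul : A ⟶ A ⊗ A) (counit : A ⟶ 𝟙_ C)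
    (one_mul : (λ_ A).inv ≫ (one ⊗ₘ 𝟙 A) ≫ mul = 𝟙 A)
    (mul_one : (ρ_ A).inv ≫ (𝟙 A ⊗ₘ one) ≫ mul = 𝟙 A)
    (counit_comul : comul ≫ (counit ⊗ₘ 𝟙 A) ≫ (λ_ A).hom = 𝟙 A)
    (comul_counit : comul ≫ (𝟙 A ⊗ₘ counit) ≫ (ρ_ A).hom = 𝟙 A)
    (frob₁ : mul ≫ comul = (comul ⊗ₘ 𝟙 A) ≫ (α_ A A A).hom ≫ (𝟙 A ⊗ₘ mul))
    (frob₂ : mul ≫ comul = (𝟙 A ⊗ₘ comul) ≫ (α_ A A A).inv ≫ (mul ⊗ₘ 𝟙 A)) :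
    ((mul ⊗ₘ 𝟙 A) ≫ mul = (α_ A A A).hom ≫ (𝟙 A ⊗ₘ mul) ≫ mul) ∧
      (comul ≫ (comul ⊗ₘ 𝟙 A) ≫ (α_ A A A).hom = comul ≫ (𝟙 A ⊗ₘ comul)) := by
  have pent1 : (α_ A (A ⊗ A) A).hom ≫ (𝟙 A ⊗ₘ (α_ A A A).hom) ≫ (α_ A A (A ⊗ A)).inv
      = ((α_ A A A).inv ⊗ₘ 𝟙 A) ≫ (α_ (A ⊗ A) A A).hom := by monoidal
  have pent2 : (α_ (A ⊗ A) A A).inv ≫ ((α_ A A A).hom ⊗ₘ 𝟙 A) ≫ (α_ A (A ⊗ A) A).hom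
      = (α_ A A (A ⊗ A)).hom ≫ (𝟙 A ⊗ₘ (α_ A A A).inv) := by monoidal
  constructor
  · -- associativity
    have L : (mul ⊗ₘ 𝟙 A) ≫ mul
        = (((𝟙 A ⊗ₘ comul) ≫ (α_ A A A).inv ≫ (mul ⊗ₘ 𝟙 A)) ⊗ₘ 𝟙 A) ≫ (α_ A A A).hom ≫
            (𝟙 A ⊗ₘ mul) ≫ (𝟙 A ⊗ₘ counit) ≫ (ρ_ A).hom := calc
      (mul ⊗ₘ 𝟙 A) ≫ mul
          = (mul ⊗ₘ 𝟙 A) ≫ mul ≫ comul ≫ (𝟙 A ⊗ₘ counit) ≫ (ρ_ A).hom := by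
            slice_rhs 3 5 => rw [comul_counit]
            simp
        _ = (mul ⊗ₘ 𝟙 A) ≫ (comul ⊗ₘ 𝟙 A) ≫ (α_ A A A).hom ≫ (𝟙 A ⊗ₘ mul) ≫
              (𝟙 A ⊗ₘ counit) ≫ (ρ_ A).hom := by
            slice_lhs 2 3 => rw [frob₁]
            simp
        _ = ((mul ≫ comul) ⊗ₘ 𝟙 A) ≫ (α_ A A A).hom ≫ (𝟙 A ⊗ₘ mul) ≫
              (𝟙 A ⊗ₘ counit) ≫ (ρ_ A).hom := by
            rw [tensorHom_comp_tensorHom_assoc, Category.comp_id]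
        _ = (((𝟙 A ⊗ₘ comul) ≫ (α_ A A A).inv ≫ (mul ⊗ₘ 𝟙 A)) ⊗ₘ 𝟙 A) ≫ (α_ A A A).hom ≫
              (𝟙 A ⊗ₘ mul) ≫ (𝟙 A ⊗ₘ counit) ≫ (ρ_ A).hom := by
            rw [frob₂]
    have R : (α_ A A A).hom ≫ (𝟙 A ⊗ₘ mul) ≫ mul
        = (α_ A A A).hom ≫ (𝟙 A ⊗ₘ ((comul ⊗ₘ 𝟙 A) ≫ (α_ A A A).hom ≫ (𝟙 A ⊗ₘ mul))) ≫
            (α_ A A A).inv ≫ (mul ⊗ₘ 𝟙 A) ≫ (𝟙 A ⊗ₘ counit) ≫ (ρ_ A).hom := calc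
      (α_ A A A).hom ≫ (𝟙 A ⊗ₘ mul) ≫ mul
          = (α_ A A A).hom ≫ (𝟙 A ⊗ₘ mul) ≫ mul ≫ comul ≫ (𝟙 A ⊗ₘ counit) ≫ (ρ_ A).hom := by
            slice_rhs 4 6 => rw [comul_counit]
            simp
        _ = (α_ A A A).hom ≫ (𝟙 A ⊗ₘ mul) ≫ (𝟙 A ⊗ₘ comul) ≫ (α_ A A A).inv ≫ (mul ⊗ₘ 𝟙 A) ≫
              (𝟙 A ⊗ₘ counit) ≫ (ρ_ A).hom := by
            slice_lhs 3 4 => rw [frob₂]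
            simp
        _ = (α_ A A A).hom ≫ (𝟙 A ⊗ₘ (mul ≫ comul)) ≫ (α_ A A A).inv ≫ (mul ⊗ₘ 𝟙 A) ≫
              (𝟙 A ⊗ₘ counit) ≫ (ρ_ A).hom := by
            rw [tensorHom_comp_tensorHom_assoc, Category.comp_id]
        _ = (α_ A A A).hom ≫ (𝟙 A ⊗ₘ ((comul ⊗ₘ 𝟙 A) ≫ (α_ A A A).hom ≫ (𝟙 A ⊗ₘ mul))) ≫
              (α_ A A A).inv ≫ (mul ⊗ₘ 𝟙 A) ≫ (𝟙 A ⊗ₘ counit) ≫ (ρ_ A).hom := by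
            rw [frob₁]
    have E1 : (((𝟙 A ⊗ₘ comul) ≫ (α_ A A A).inv ≫ (mul ⊗ₘ 𝟙 A)) ⊗ₘ 𝟙 A) ≫ (α_ A A A).hom ≫
          (𝟙 A ⊗ₘ mul) ≫ (𝟙 A ⊗ₘ counit) ≫ (ρ_ A).hom
        = ((𝟙 A ⊗ₘ comul) ⊗ₘ 𝟙 A) ≫ ((α_ A A A).inv ⊗ₘ 𝟙 A) ≫ (α_ (A ⊗ A) A A).hom ≫
            (mul ⊗ₘ mul) ≫ (𝟙 A ⊗ₘ counit) ≫ (ρ_ A).hom := by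
      simp only [comp_tensor_id, Category.assoc]
      slice_lhs 3 4 => rw [associator_naturality]
      slice_lhs 4 5 => rw [id_tensorHom_id, tensor_id_comp_id_tensor]
      simp only [Category.assoc]
    have E2 : (α_ A A A).hom ≫ (𝟙 A ⊗ₘ ((comul ⊗ₘ 𝟙 A) ≫ (α_ A A A).hom ≫ (𝟙 A ⊗ₘ mul))) ≫
          (α_ A A A).inv ≫ (mul ⊗ₘ 𝟙 A) ≫ (𝟙 A ⊗ₘ counit) ≫ (ρ_ A).hom
        = ((𝟙 A ⊗ₘ comul) ⊗ₘ 𝟙 A) ≫ ((α_ A A A).inv ⊗ₘ 𝟙 A) ≫ (α_ (A ⊗ A) A A).hom ≫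
            (mul ⊗ₘ mul) ≫ (𝟙 A ⊗ₘ counit) ≫ (ρ_ A).hom := by
      simp only [id_tensor_comp, Category.assoc]
      slice_lhs 4 5 => rw [associator_inv_naturality]
      slice_lhs 5 6 => rw [id_tensorHom_id, id_tensor_comp_tensor_id]
      slice_lhs 1 2 => rw [← associator_naturality]
      slice_lhs 2 4 => rw [pent1]
      simp only [Category.assoc]
    rw [L, R, E1, E2]
  · -- coassociativity
    have C1 : comul ≫ (comul ⊗ₘ 𝟙 A) ≫ (α_ A A A).hom
        = (ρ_ A).inv ≫ (𝟙 A ⊗ₘ one) ≫ (𝟙 A ⊗ₘ comul) ≫ (α_ A A A).inv ≫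
            (((comul ⊗ₘ 𝟙 A) ≫ (α_ A A A).hom ≫ (𝟙 A ⊗ₘ mul)) ⊗ₘ 𝟙 A) ≫ (α_ A A A).hom := calc
      comul ≫ (comul ⊗ₘ 𝟙 A) ≫ (α_ A A A).hom
          = (ρ_ A).inv ≫ (𝟙 A ⊗ₘ one) ≫ mul ≫ comul ≫ (comul ⊗ₘ 𝟙 A) ≫ (α_ A A A).hom := by
            slice_rhs 1 3 => rw [mul_one]
            simp
        _ = (ρ_ A).inv ≫ (𝟙 A ⊗ₘ one) ≫ (𝟙 A ⊗ₘ comul) ≫ (α_ A A A).inv ≫ (mul ⊗ₘ 𝟙 A) ≫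
              (comul ⊗ₘ 𝟙 A) ≫ (α_ A A A).hom := by
            slice_lhs 3 4 => rw [frob₂]
            simp only [Category.assoc]
        _ = (ρ_ A).inv ≫ (𝟙 A ⊗ₘ one) ≫ (𝟙 A ⊗ₘ comul) ≫ (α_ A A A).inv ≫
              ((mul ≫ comul) ⊗ₘ 𝟙 A) ≫ (α_ A A A).hom := by
            slice_lhs 5 6 => rw [← comp_tensor_id]
        _ = (ρ_ A).inv ≫ (𝟙 A ⊗ₘ one) ≫ (𝟙 A ⊗ₘ comul) ≫ (α_ A A A).inv ≫
              (((comul ⊗ₘ 𝟙 A) ≫ (α_ A A A).hom ≫ (𝟙 A ⊗ₘ mul)) ⊗ₘ 𝟙 A) ≫ (α_ A A A).hom := by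
            rw [frob₁]
    have C2 : comul ≫ (𝟙 A ⊗ₘ comul)
        = (ρ_ A).inv ≫ (𝟙 A ⊗ₘ one) ≫ (comul ⊗ₘ 𝟙 A) ≫ (α_ A A A).hom ≫
            (𝟙 A ⊗ₘ ((𝟙 A ⊗ₘ comul) ≫ (α_ A A A).inv ≫ (mul ⊗ₘ 𝟙 A))) := calc
      comul ≫ (𝟙 A ⊗ₘ comul)
          = (ρ_ A).inv ≫ (𝟙 A ⊗ₘ one) ≫ mul ≫ comul ≫ (𝟙 A ⊗ₘ comul) := by
            slice_rhs 1 3 => rw [mul_one]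
            simp
        _ = (ρ_ A).inv ≫ (𝟙 A ⊗ₘ one) ≫ (comul ⊗ₘ 𝟙 A) ≫ (α_ A A A).hom ≫ (𝟙 A ⊗ₘ mul) ≫
              (𝟙 A ⊗ₘ comul) := by
            slice_lhs 3 4 => rw [frob₁]
            simp only [Category.assoc]
        _ = (ρ_ A).inv ≫ (𝟙 A ⊗ₘ one) ≫ (comul ⊗ₘ 𝟙 A) ≫ (α_ A A A).hom ≫
              (𝟙 A ⊗ₘ (mul ≫ comul)) := by
            slice_lhs 5 6 => rw [← id_tensor_comp]
        _ = (ρ_ A).inv ≫ (𝟙 A ⊗ₘ one) ≫ (comul ⊗ₘ 𝟙 A) ≫ (α_ A A A).hom ≫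
              (𝟙 A ⊗ₘ ((𝟙 A ⊗ₘ comul) ≫ (α_ A A A).inv ≫ (mul ⊗ₘ 𝟙 A))) := by
            rw [frob₂]
    have D1 : (𝟙 A ⊗ₘ comul) ≫ (α_ A A A).inv ≫
          (((comul ⊗ₘ 𝟙 A) ≫ (α_ A A A).hom ≫ (𝟙 A ⊗ₘ mul)) ⊗ₘ 𝟙 A) ≫ (α_ A A A).hom
        = (comul ⊗ₘ comul) ≫ (α_ A A (A ⊗ A)).hom ≫ (𝟙 A ⊗ₘ (α_ A A A).inv) ≫
            (𝟙 A ⊗ₘ (mul ⊗ₘ 𝟙 A)) := by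
      simp only [comp_tensor_id, Category.assoc]
      slice_lhs 5 6 => rw [associator_naturality]
      slice_lhs 2 3 => rw [← associator_inv_naturality]
      slice_lhs 1 2 => rw [id_tensorHom_id, id_tensor_comp_tensor_id]
      slice_lhs 2 4 => rw [pent2]
      simp only [Category.assoc]
    have D2 : (comul ⊗ₘ 𝟙 A) ≫ (α_ A A A).hom ≫
          (𝟙 A ⊗ₘ ((𝟙 A ⊗ₘ comul) ≫ (α_ A A A).inv ≫ (mul ⊗ₘ 𝟙 A)))
        = (comul ⊗ₘ comul) ≫ (α_ A A (A ⊗ A)).hom ≫ (𝟙 A ⊗ₘ (α_ A A A).inv) ≫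
            (𝟙 A ⊗ₘ (mul ⊗ₘ 𝟙 A)) := by
      simp only [id_tensor_comp, Category.assoc]
      slice_lhs 2 3 => rw [← associator_naturality]
      slice_lhs 1 2 => rw [id_tensorHom_id, tensor_id_comp_id_tensor]
      simp only [Category.assoc]
    rw [C1, C2, D1, D2]
end
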